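/- arXiv:2507.07609 — 4 statements merged into one kernel-verified Lean document; each statement's English description precedes it below -/
import Mathlib

section
/- Let f̄ = y₁^(k+1) + y₂ + y₂y₃² ∈ ℂ[y₁,y₂,y₃] with k ≥ 1. Then Jac(f̄) is a 2k-dimensional ℂ-vector space with basis given by the classes of 1, y₁, …, y₁^(k-1), y₃, y₁y₃, …, y₁^(k-1)y₃. -/
/-!
The partial derivatives of `f̄` are `(k+1)y₁^k`, `1 + y₃²` and `2y₂y₃`, and
`y₂ = y₂(1 + y₃²) - (y₃/2)(2y₂y₃)`, so the Jacobian ideal is `(y₁^k, y₂, y₃² + 1)`.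
Hence `Jac(f̄) ≅ ℂ[y₁]/(y₁^k)[y₃]/(y₃² + 1)`, and the product of the power bases of the two
steps of this tower is `{y₁^i y₃^j : i < k, j < 2}`.
-/

open MvPolynomial

noncomputable section

lemma Ideal.Quotient.aeval_mk_eq_zero {K A : Type*} [CommRing K] [CommRing A] [Algebra K A]
    {I : Ideal A} {x : A} {r : Polynomial K} (h : Polynomial.aeval x r ∈ I) :
    Polynomial.aeval (Ideal.Quotient.mk I x) r = 0 := by
  rwa [← Ideal.Quotient.mkₐ_eq_mk K, Polynomial.aeval_algHom_apply, Ideal.Quotient.mkₐ_eq_mk,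
    Ideal.Quotient.eq_zero_iff_mem]

namespace AdjoinRootTower

open AdjoinRoot

variable {K : Type*} [CommRing K] (p q : Polynomial K)

/-- `K[y₁]/(p)[y₃]/(q)`, a model of `K[y₁,y₂,y₃]/(p(y₁), y₂, q(y₃))` (see `quotEquiv`). -/
abbrev Tower : Type _ := AdjoinRoot (q.map (of p))

def ideal : Ideal (MvPolynomial (Fin 3) K) :=
  Ideal.span {Polynomial.aeval (X 0) p, X 1, Polynomial.aeval (X 2) q}

def eval : MvPolynomial (Fin 3) K →ₐ[K] Tower p q :=
  aeval ![of _ (root p), 0, root _]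

lemma aeval_of_root : Polynomial.aeval (of (q.map (of p)) (root p)) p = 0 := by
  change Polynomial.aeval (algebraMap (AdjoinRoot p) (Tower p q) (root p)) p = 0
  rw [Polynomial.aeval_algebraMap_apply, aeval_eq, mk_self, map_zero]

lemma aeval_root_map_of : Polynomial.aeval (root (q.map (of p))) q = 0 := by
  rw [← AdjoinRoot.algebraMap_eq, ← Polynomial.aeval_map_algebraMap (AdjoinRoot p),
    AdjoinRoot.algebraMap_eq, AdjoinRoot.aeval_eq, mk_self]

lemma ideal_le_ker_eval : ideal p q ≤ RingHom.ker (eval p q) := by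
  rw [ideal, Ideal.span_le]
  rintro _ (rfl | rfl | rfl) <;>
    simp [eval, ← Polynomial.aeval_algHom_apply, aeval_of_root, aeval_root_map_of]

def quotToTower : (MvPolynomial (Fin 3) K ⧸ ideal p q) →ₐ[K] Tower p q :=
  Ideal.Quotient.liftₐ _ (eval p q) fun _ ha ↦ ideal_le_ker_eval p q ha

@[simp]
lemma quotToTower_mk (f : MvPolynomial (Fin 3) K) :
    quotToTower p q (Ideal.Quotient.mk _ f) = eval p q f :=
  rfl

@[simp]
lemma mk_X_one : Ideal.Quotient.mk (ideal p q) (X 1) = 0 :=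
  Ideal.Quotient.eq_zero_iff_mem.2 (Ideal.subset_span (by simp))

def towerToQuot : Tower p q →ₐ[K] (MvPolynomial (Fin 3) K ⧸ ideal p q) :=
  liftAlgHom _
    (liftAlgHom p (Algebra.ofId K _) (Ideal.Quotient.mk _ (X 0))
      (by
        rw [Algebra.toRingHom_ofId, ← Polynomial.aeval_def]
        exact Ideal.Quotient.aeval_mk_eq_zero (Ideal.subset_span (by simp))))
    (Ideal.Quotient.mk _ (X 2))
    (by
      rw [Polynomial.eval₂_map, ← AdjoinRoot.algebraMap_eq, AlgHom.comp_algebraMap]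
      exact Ideal.Quotient.aeval_mk_eq_zero (Ideal.subset_span (by simp)))

def quotEquiv : (MvPolynomial (Fin 3) K ⧸ ideal p q) ≃ₐ[K] Tower p q :=
  AlgEquiv.ofAlgHom (quotToTower p q) (towerToQuot p q)
    (by ext <;> simp [towerToQuot, eval])
    (by
      apply Ideal.Quotient.algHom_ext
      apply MvPolynomial.algHom_ext
      intro i
      fin_cases i <;> simp [towerToQuot, eval])

@[simp]
lemma quotEquiv_mk (f : MvPolynomial (Fin 3) K) :
    quotEquiv p q (Ideal.Quotient.mk _ f) = eval p q f :=
  rfl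

@[simp]
lemma quotEquiv_symm_of_root :
    (quotEquiv p q).symm (of _ (root p)) = Ideal.Quotient.mk _ (X 0) :=
  (AlgEquiv.symm_apply_eq _).2 (by simp [eval])

@[simp]
lemma quotEquiv_symm_root : (quotEquiv p q).symm (root _) = Ideal.Quotient.mk _ (X 2) :=
  (AlgEquiv.symm_apply_eq _).2 (by simp [eval])

variable {p q}

def basis (hp : p.Monic) (hq : q.Monic) :
    Module.Basis (Fin p.natDegree × Fin (q.map (of p)).natDegree) K (Tower p q) :=
  (powerBasisAux' hp).smulTower (powerBasisAux' (hq.map (of p)))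

lemma basis_apply (hp : p.Monic) (hq : q.Monic) (i : Fin p.natDegree)
    (j : Fin (q.map (of p)).natDegree) :
    basis hp hq (i, j) = of _ (root p ^ (i : ℕ)) * root _ ^ (j : ℕ) := by
  rw [basis, Module.Basis.smulTower_apply, Algebra.smul_def, AdjoinRoot.algebraMap_eq]
  exact congr($((powerBasis' hp).basis_eq_pow i) *
    $((powerBasis' (hq.map (of p))).basis_eq_pow j))

end AdjoinRootTower

lemma span_pderiv_eq {K : Type*} [Field K] [CharZero K] (k : ℕ) {f : MvPolynomial (Fin 3) K}
    (hf : f = X 0 ^ (k + 1) + X 1 + X 1 * X 2 ^ 2) :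
    Ideal.span {pderiv 0 f, pderiv 1 f, pderiv 2 f} = Ideal.span {X 0 ^ k, X 1, X 2 ^ 2 + 1} := by
  have h0 : pderiv 0 f = C ((k : K) + 1) * X 0 ^ k := by
    subst hf; simp [pderiv_X]
  have h1 : pderiv 1 f = X 2 ^ 2 + 1 := by
    subst hf; simp [pderiv_X]; ring
  have h2 : pderiv 2 f = 2 * X 1 * X 2 := by
    subst hf; simp [pderiv_X]; ring
  rw [h0, h1, h2]
  apply le_antisymm <;> rw [Ideal.span_le]
  · rintro _ (rfl | rfl | rfl)
    · exact Ideal.mul_mem_left _ _ (Ideal.subset_span (by simp))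
    · exact Ideal.subset_span (by simp)
    · exact Ideal.mul_mem_right _ _ (Ideal.mul_mem_left _ _ (Ideal.subset_span (by simp)))
  · set S : Set (MvPolynomial (Fin 3) K) :=
      {C ((k : K) + 1) * X 0 ^ k, X 2 ^ 2 + 1, 2 * X 1 * X 2} with hS
    rintro _ (rfl | rfl | rfl)
    · rw [← one_mul (X 0 ^ k), ← C_1, ← inv_mul_cancel₀ k.cast_add_one_ne_zero, C_mul, mul_assoc]
      exact Ideal.mul_mem_left _ _ (Ideal.subset_span (by simp [hS]))
    · have h2inv : C (2⁻¹ : K) * 2 = (1 : MvPolynomial (Fin 3) K) := by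
        rw [← map_ofNat C 2, ← C_mul, inv_mul_cancel₀ two_ne_zero, C_1]
      rw [show (X 1 : MvPolynomial (Fin 3) K) =
          X 1 * (X 2 ^ 2 + 1) - C (2⁻¹ : K) * X 2 * (2 * X 1 * X 2) by
        linear_combination (X 1 * X 2 ^ 2) * h2inv]
      exact Ideal.sub_mem _ (Ideal.mul_mem_left _ _ (Ideal.subset_span (by simp [hS])))
        (Ideal.mul_mem_left _ _ (Ideal.subset_span (by simp [hS])))
    · exact Ideal.subset_span (by simp [hS])

lemma Polynomial.monic_X_sq_add_one {K : Type*} [CommRing K] :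
    (Polynomial.X ^ 2 + 1 : Polynomial K).Monic := by
  simpa using Polynomial.monic_X_pow_add_C (1 : K) two_ne_zero

def sumSelfEquivProdFinTwo (α : Type*) : α ⊕ α ≃ α × Fin 2 :=
  (Equiv.boolProdEquivSum α).symm.trans
    ((Equiv.prodComm _ _).trans (Equiv.prodCongr (Equiv.refl α) finTwoEquiv.symm))

/-- `Jac(f̄)` for `f̄ = y₁^(k+1) + y₂ + y₂y₃²` is `2k`-dimensional, with basis the
classes of `1, y₁, …, y₁^(k-1), y₃, y₁y₃, …, y₁^(k-1)y₃`. -/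
theorem stmt1 (k : ℕ) (hk : 1 ≤ k)
    (f : MvPolynomial (Fin 3) ℂ)
    (hf : f = X 0 ^ (k + 1) + X 1 + X 1 * X 2 ^ 2)
    (J : Ideal (MvPolynomial (Fin 3) ℂ))
    (hJ : J = Ideal.span {pderiv 0 f, pderiv 1 f, pderiv 2 f}) :
    Module.finrank ℂ (MvPolynomial (Fin 3) ℂ ⧸ J) = 2 * k ∧
    ∃ b : Module.Basis (Fin k ⊕ Fin k) ℂ (MvPolynomial (Fin 3) ℂ ⧸ J),
      (∀ i : Fin k, b (Sum.inl i) = Ideal.Quotient.mk J (X 0 ^ (i : ℕ))) ∧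
      (∀ i : Fin k, b (Sum.inr i) = Ideal.Quotient.mk J (X 0 ^ (i : ℕ) * X 2)) := by
  obtain rfl : J = AdjoinRootTower.ideal (Polynomial.X ^ k) (Polynomial.X ^ 2 + 1) := by
    rw [hJ, span_pderiv_eq k hf]
    simp [AdjoinRootTower.ideal]
  have : Nontrivial (AdjoinRoot (Polynomial.X ^ k : Polynomial ℂ)) :=
    AdjoinRoot.nontrivial _ (by simp; omega)
  have hdeg : ((Polynomial.X ^ 2 + 1 : Polynomial ℂ).map
      (AdjoinRoot.of (Polynomial.X ^ k))).natDegree = 2 := by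
    rw [Polynomial.monic_X_sq_add_one.natDegree_map]
    simpa using Polynomial.natDegree_X_pow_add_C (n := 2) (r := (1 : ℂ))
  let e := (sumSelfEquivProdFinTwo (Fin k)).trans
    (Equiv.prodCongr (finCongr (Polynomial.natDegree_X_pow (R := ℂ) k).symm) (finCongr hdeg.symm))
  let b := ((AdjoinRootTower.basis (Polynomial.monic_X_pow k)
    Polynomial.monic_X_sq_add_one).reindex e.symm).map
    (AdjoinRootTower.quotEquiv _ _).symm.toLinearEquiv
  refine ⟨by simp [Module.finrank_eq_card_basis b, two_mul], b, fun i ↦ ?_, fun i ↦ ?_⟩ <;>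
    simp [b, e, AdjoinRootTower.basis_apply, sumSelfEquivProdFinTwo, finTwoEquiv]
end
end

section
/- Let f̄ = y₁² + y₂²y₃ + y₂y₃^(k+1) with k ≥ 1 (a D_{2(k+1)} type polynomial). Then Jac(f̄) has ℂ-dimension 2k+2, and in Jac(f̄) the identity [(y₂ + ½y₃^k)²] = [(2k+1)/4 · y₃^(2k)] holds. -/
/-!
Write `w = 2y₂ + y₃^k`, twice the paper's `y₂ + ½y₃^k`. The Jacobian ideal contains `y₁`,
`y₃w = ∂f/∂y₂` and `w² - (2k+1)y₃^(2k) = 4∂f/∂y₃ - 2k y₃^(k-1)·y₃w`, hence also `y₃^(2k+1)`;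
so `Jac(f)` is spanned by the classes of `w, 1, y₃, …, y₃^(2k)`, and the identity is
`w² ≡ (2k+1)y₃^(2k)` divided by 4. For independence, the functional `residue` (the coefficient of
the socle class `y₃^(2k)` in the normal form) kills `q·∂f/∂yᵢ` for every `q`, hence the whole
ideal, and `(a, b) ↦ residue (a b)` pairs the spanning family perfectly with
`w / (2k+1), y₃^(2k), …, 1`.
-/

open MvPolynomial

theorem mul_mem_span_range {R A ι : Type*} [CommSemiring R] [Semiring A] [Algebra R A]
    {b : ι → A} {z : A} (h : ∀ t, b t * z ∈ Submodule.span R (Set.range b)) {y : A}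
    (hy : y ∈ Submodule.span R (Set.range b)) : y * z ∈ Submodule.span R (Set.range b) :=
  (Submodule.span_le (p := (Submodule.span R (Set.range b)).comap (LinearMap.mulRight R z))).mpr
    (Set.range_subset_iff.mpr h) hy

noncomputable section

namespace DSingularity

variable (K : Type*) [Field K] (k : ℕ)

local notation "𝒫" => MvPolynomial (Fin 3) K

def f : 𝒫 := X 0 ^ 2 + X 1 ^ 2 * X 2 + X 1 * X 2 ^ (k + 1)

def jacobianIdeal : Ideal 𝒫 :=
  Ideal.span {pderiv 0 (f K k), pderiv 1 (f K k), pderiv 2 (f K k)}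

def w : 𝒫 := 2 * X 1 + X 2 ^ k

def exponent (j i : ℕ) : Fin 3 →₀ ℕ := Finsupp.single 1 j + Finsupp.single 2 i

/-- Modulo the Jacobian ideal, `y₂y₃^k ≡ -½y₃^(2k)` and `y₂² ≡ (k+1)/2·y₃^(2k)`. -/
def residue : 𝒫 →ₗ[K] K :=
  lcoeff K (exponent 0 (2 * k)) - (1 / 2 : K) • lcoeff K (exponent 1 k) +
    (((k : K) + 1) / 2) • lcoeff K (exponent 2 0)

def basisPoly : Option (Fin (2 * k + 1)) → 𝒫
  | none => w K k
  | some i => X 2 ^ (i : ℕ)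

def dualPoly : Option (Fin (2 * k + 1)) → 𝒫
  | none => C (2 * (k : K) + 1)⁻¹ * w K k
  | some j => X 2 ^ (2 * k - j)

variable {K k}

theorem monomial_exponent (j i : ℕ) (a : K) :
    monomial (exponent j i) a = C a * X 1 ^ j * X 2 ^ i := by
  rw [X_pow_eq_monomial, X_pow_eq_monomial, C_mul_monomial, monomial_mul, mul_one, mul_one,
    exponent]

theorem exponent_le_exponent_iff {j i j' i' : ℕ} :
    exponent j' i' ≤ exponent j i ↔ j' ≤ j ∧ i' ≤ i := by
  simp [exponent, Finsupp.le_def, Fin.forall_fin_succ]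

theorem exponent_inj {j i j' i' : ℕ} : exponent j' i' = exponent j i ↔ j' = j ∧ i' = i := by
  simp [exponent, Finsupp.ext_iff, Fin.forall_fin_succ]

theorem exponent_sub_exponent (j i j' i' : ℕ) :
    exponent j i - exponent j' i' = exponent (j - j') (i - i') := by
  ext s; fin_cases s <;> simp [exponent]

theorem pderiv_zero_f : pderiv 0 (f K k) = monomial (Finsupp.single 0 1) 2 := by
  simp [f, ← C_mul_X_eq_monomial, map_ofNat]

theorem pderiv_one_f :
    pderiv 1 (f K k) = monomial (exponent 1 1) 2 + monomial (exponent 0 (k + 1)) 1 := by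
  simp [f, monomial_exponent, map_ofNat]; ring

theorem pderiv_two_f :
    pderiv 2 (f K k) = monomial (exponent 2 0) 1 + monomial (exponent 1 k) ((k : K) + 1) := by
  simp [f, monomial_exponent]; ring

theorem pderiv_mem_jacobianIdeal (i : Fin 3) : pderiv i (f K k) ∈ jacobianIdeal K k := by
  apply Ideal.subset_span
  match i with
  | 0 | 1 | 2 => simp

theorem X_two_mul_w_mem : X 2 * w K k ∈ jacobianIdeal K k := by
  have h : X 2 * w K k = pderiv 1 (f K k) := by simp [f, w]; ring
  exact h ▸ pderiv_mem_jacobianIdeal 1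

theorem w_sq_sub_mem (hk : 1 ≤ k) :
    w K k ^ 2 - C (2 * (k : K) + 1) * X 2 ^ (2 * k) ∈ jacobianIdeal K k := by
  have h : w K k ^ 2 - C (2 * (k : K) + 1) * X 2 ^ (2 * k) =
      4 * pderiv 2 (f K k) - 2 * (k : 𝒫) * X 2 ^ (k - 1) * (X 2 * w K k) := by
    obtain ⟨m, rfl⟩ : ∃ m, k = m + 1 := ⟨k - 1, by omega⟩
    simp [f, w, map_ofNat]; ring
  rw [h]
  exact sub_mem (Ideal.mul_mem_left _ _ (pderiv_mem_jacobianIdeal 2))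
    (Ideal.mul_mem_left _ _ X_two_mul_w_mem)

theorem residue_apply (p : 𝒫) :
    residue K k p = coeff (exponent 0 (2 * k)) p - 1 / 2 * coeff (exponent 1 k) p +
      ((k : K) + 1) / 2 * coeff (exponent 2 0) p := rfl

theorem residue_monomial_exponent (j i : ℕ) (a : K) :
    residue K k (monomial (exponent j i) a) =
      a * ((if j = 0 ∧ i = 2 * k then 1 else 0) - (if j = 1 ∧ i = k then 1 / 2 else 0) +
        (if j = 2 ∧ i = 0 then ((k : K) + 1) / 2 else 0)) := by
  simp only [residue_apply, coeff_monomial, exponent_inj]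
  split_ifs <;> ring

theorem residue_C_mul (a : K) (p : 𝒫) : residue K k (C a * p) = a * residue K k p := by
  rw [← smul_eq_C_mul, map_smul, smul_eq_mul]

theorem residue_X_two_pow (n : ℕ) : residue K k (X 2 ^ n) = if n = 2 * k then 1 else 0 := by
  have h : (X 2 ^ n : 𝒫) = monomial (exponent 0 n) 1 := by simp [monomial_exponent]
  simp [h, residue_monomial_exponent]

local notation "π" => Ideal.Quotient.mkₐ K (jacobianIdeal K k)
local notation "S" => Submodule.span K (Set.range fun t => π (basisPoly K k t))

theorem mkₐ_eq_zero_of_mem {p : 𝒫} (hp : p ∈ jacobianIdeal K k) : π p = 0 := by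
  rwa [Ideal.Quotient.mkₐ_eq_mk, Ideal.Quotient.eq_zero_iff_mem]

theorem mk_X_two_pow_mul_w_mem_span (n : ℕ) : π (X 2 ^ n * w K k) ∈ S := by
  cases n with
  | zero =>
    rw [pow_zero, one_mul]
    exact Submodule.subset_span ⟨none, rfl⟩
  | succ n =>
    rw [pow_succ, mul_assoc, mkₐ_eq_zero_of_mem (Ideal.mul_mem_left _ _ X_two_mul_w_mem)]
    exact zero_mem _

variable [CharZero K]

theorem residue_mul_pderiv (hk : 1 ≤ k) (q : 𝒫) (i : Fin 3) :
    residue K k (q * pderiv i (f K k)) = 0 := by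
  match i with
  | 0 => simp [residue_apply, pderiv_zero_f, coeff_mul_monomial', exponent, Finsupp.single_le_iff]
  | 1 =>
    simp only [residue_apply, pderiv_one_f, mul_add, coeff_add, coeff_mul_monomial',
      exponent_le_exponent_iff, exponent_sub_exponent]
    simp [hk, show k + 1 ≤ 2 * k by omega, show 2 * k - (k + 1) = k - 1 by omega]
    ring
  | 2 =>
    simp only [residue_apply, pderiv_two_f, mul_add, coeff_add, coeff_mul_monomial',
      exponent_le_exponent_iff, exponent_sub_exponent]
    simp [show k ≠ 0 by omega]
    ring

theorem residue_mul_of_mem (hk : 1 ≤ k) {p : 𝒫} (hp : p ∈ jacobianIdeal K k) (q : 𝒫) :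
    residue K k (q * p) = 0 := by
  induction hp using Submodule.span_induction generalizing q with
  | mem p hp => obtain rfl | rfl | rfl := hp <;> exact residue_mul_pderiv hk q _
  | zero => simp
  | add p p' _ _ h h' => rw [mul_add, map_add, h, h', add_zero]
  | smul r p _ h => rw [smul_eq_mul, ← mul_assoc, h]

theorem residue_X_two_pow_mul_w (n : ℕ) : residue K k (X 2 ^ n * w K k) = 0 := by
  have h : X 2 ^ n * w K k = monomial (exponent 1 n) 2 + monomial (exponent 0 (n + k)) 1 := by
    simp only [w, monomial_exponent, map_ofNat, pow_zero, pow_one, C_1, mul_one, one_mul]; ring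
  simp only [h, map_add, residue_monomial_exponent]
  simp [show n + k = 2 * k ↔ n = k by omega]

theorem residue_w_mul_w : residue K k (w K k * w K k) = 2 * k + 1 := by
  have h : w K k * w K k =
      monomial (exponent 2 0) 4 + monomial (exponent 1 k) 4 + monomial (exponent 0 (2 * k)) 1 := by
    simp only [w, monomial_exponent, map_ofNat, pow_zero, pow_one, C_1, mul_one, one_mul]; ring
  simp only [h, map_add, residue_monomial_exponent]
  simp
  ring

theorem residue_dualPoly_mul_basisPoly (s t : Option (Fin (2 * k + 1))) :
    residue K k (dualPoly K k s * basisPoly K k t) = if s = t then 1 else 0 := by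
  match s, t with
  | none, none =>
    rw [dualPoly, basisPoly, mul_assoc, residue_C_mul, residue_w_mul_w, if_pos rfl]
    exact inv_mul_cancel₀ (by exact_mod_cast (2 * k).succ_ne_zero)
  | none, some i =>
    rw [dualPoly, basisPoly, mul_assoc, residue_C_mul, mul_comm (w K k), residue_X_two_pow_mul_w]
    simp
  | some j, none => simp [dualPoly, basisPoly, residue_X_two_pow_mul_w]
  | some j, some i =>
    rw [dualPoly, basisPoly, ← pow_add, residue_X_two_pow]
    simp only [Option.some.injEq, Fin.ext_iff]
    congr 1
    apply propext
    omega

theorem X_zero_mem : X 0 ∈ jacobianIdeal K k := by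
  have h : (X 0 : 𝒫) = C (1 / 2) * pderiv 0 (f K k) := by
    rw [pderiv_zero_f, C_mul_monomial, ← C_mul_X_eq_monomial]
    norm_num
  rw [h]
  exact Ideal.mul_mem_left _ _ (pderiv_mem_jacobianIdeal 0)

theorem X_two_pow_mem (hk : 1 ≤ k) : X 2 ^ (2 * k + 1) ∈ jacobianIdeal K k := by
  have h : C (2 * (k : K) + 1) * X 2 ^ (2 * k + 1) =
      w K k * (X 2 * w K k) - X 2 * (w K k ^ 2 - C (2 * (k : K) + 1) * X 2 ^ (2 * k)) := by
    ring
  have hmem : C (2 * (k : K) + 1) * X 2 ^ (2 * k + 1) ∈ jacobianIdeal K k := by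
    rw [h]
    exact sub_mem (Ideal.mul_mem_left _ _ X_two_mul_w_mem)
      (Ideal.mul_mem_left _ _ (w_sq_sub_mem hk))
  have hunit : IsUnit (C (2 * (k : K) + 1) : 𝒫) :=
    (isUnit_iff_ne_zero.mpr (by exact_mod_cast (2 * k).succ_ne_zero)).map C
  exact (Ideal.unit_mul_mem_iff_mem _ hunit).mp hmem

theorem linearIndependent_mk_basisPoly (hk : 1 ≤ k) :
    LinearIndependent K fun t => π (basisPoly K k t) := by
  rw [Fintype.linearIndependent_iff]
  intro g hg s
  have hmem : ∑ t, g t • basisPoly K k t ∈ jacobianIdeal K k := by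
    rw [← Ideal.Quotient.eq_zero_iff_mem, ← Ideal.Quotient.mkₐ_eq_mk K, map_sum]
    simpa only [map_smul] using hg
  calc g s = ∑ t, g t * residue K k (dualPoly K k s * basisPoly K k t) := by
        simp [residue_dualPoly_mul_basisPoly]
    _ = residue K k (dualPoly K k s * ∑ t, g t • basisPoly K k t) := by
        simp only [Finset.mul_sum, mul_smul_comm, map_sum, map_smul, smul_eq_mul]
    _ = 0 := residue_mul_of_mem hk hmem _

theorem mk_X_two_pow_mem_span (hk : 1 ≤ k) (n : ℕ) : π (X 2 ^ n) ∈ S := by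
  by_cases hn : n ≤ 2 * k
  · exact Submodule.subset_span ⟨some (⟨n, by omega⟩ : Fin (2 * k + 1)), rfl⟩
  · have hmem : X 2 ^ n ∈ jacobianIdeal K k := by
      rw [show n = n - (2 * k + 1) + (2 * k + 1) by omega, pow_add]
      exact Ideal.mul_mem_left _ _ (X_two_pow_mem hk)
    rw [mkₐ_eq_zero_of_mem hmem]
    exact zero_mem _

theorem mul_mk_X_two_mem_span (hk : 1 ≤ k) {y : 𝒫 ⧸ jacobianIdeal K k} (hy : y ∈ S) :
    y * π (X 2) ∈ S := by
  refine mul_mem_span_range (fun t => ?_) hy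
  match t with
  | none =>
    rw [basisPoly, ← map_mul, mul_comm (w K k), ← pow_one (X 2)]
    exact mk_X_two_pow_mul_w_mem_span 1
  | some i =>
    rw [basisPoly, ← map_mul, ← pow_succ]
    exact mk_X_two_pow_mem_span hk _

theorem mul_mk_X_two_pow_mem_span (hk : 1 ≤ k) {y : 𝒫 ⧸ jacobianIdeal K k} (hy : y ∈ S)
    (n : ℕ) : y * π (X 2) ^ n ∈ S := by
  induction n with
  | zero => simpa using hy
  | succ n ih => simpa [pow_succ, mul_assoc] using mul_mk_X_two_mem_span hk ih

theorem mul_mk_w_mem_span (hk : 1 ≤ k) {y : 𝒫 ⧸ jacobianIdeal K k} (hy : y ∈ S) :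
    y * π (w K k) ∈ S := by
  refine mul_mem_span_range (fun t => ?_) hy
  match t with
  | none =>
    have h : π (w K k) * π (w K k) = (2 * (k : K) + 1) • π (X 2 ^ (2 * k)) := by
      rw [← map_mul, ← map_smul, smul_eq_C_mul, ← sub_eq_zero, ← map_sub, ← sq]
      exact mkₐ_eq_zero_of_mem (w_sq_sub_mem hk)
    rw [basisPoly, h]
    exact Submodule.smul_mem _ _ (mk_X_two_pow_mem_span hk _)
  | some i =>
    rw [basisPoly, ← map_mul]
    exact mk_X_two_pow_mul_w_mem_span i

theorem mk_X_one : π (X 1) = (1 / 2 : K) • (π (w K k) - π (X 2) ^ k) := by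
  rw [← map_pow, ← map_sub, ← map_smul, w, add_sub_cancel_right, smul_eq_C_mul, ← mul_assoc,
    ← map_ofNat C 2, ← map_mul]
  norm_num

theorem mk_mem_span (hk : 1 ≤ k) (p : 𝒫) : π p ∈ S := by
  induction p using MvPolynomial.induction_on with
  | C a =>
    rw [← mul_one (C a), ← smul_eq_C_mul, map_smul, ← pow_zero (X 2)]
    exact Submodule.smul_mem _ _ (mk_X_two_pow_mem_span hk 0)
  | add p q hp hq => rw [map_add]; exact add_mem hp hq
  | mul_X p i hp =>
    rw [map_mul]
    match i with
    | 0 => rw [mkₐ_eq_zero_of_mem X_zero_mem, mul_zero]; exact zero_mem _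
    | 1 =>
      rw [mk_X_one, mul_smul_comm, mul_sub]
      exact Submodule.smul_mem _ _
        (sub_mem (mul_mk_w_mem_span hk hp) (mul_mk_X_two_pow_mem_span hk hp k))
    | 2 => exact mul_mk_X_two_mem_span hk hp

theorem finrank_quotient_jacobianIdeal (hk : 1 ≤ k) :
    Module.finrank K (𝒫 ⧸ jacobianIdeal K k) = 2 * k + 2 := by
  have hspan : ⊤ ≤ S := fun x _ => by
    obtain ⟨p, rfl⟩ := Ideal.Quotient.mkₐ_surjective K (jacobianIdeal K k) x
    exact mk_mem_span hk p
  rw [Module.finrank_eq_card_basis (Module.Basis.mk (linearIndependent_mk_basisPoly hk) hspan),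
    Fintype.card_option, Fintype.card_fin]

theorem mk_X_one_add_half_X_two_pow_sq (hk : 1 ≤ k) :
    Ideal.Quotient.mk (jacobianIdeal K k) ((X 1 + C ((1 : K) / 2) * X 2 ^ k) ^ 2) =
      Ideal.Quotient.mk (jacobianIdeal K k) (C ((2 * (k : K) + 1) / 4) * X 2 ^ (2 * k)) := by
  have h1 : (C (1 / 4 : K) : 𝒫) * 4 = 1 := by rw [← map_ofNat C 4, ← map_mul]; norm_num
  have h2 : (C ((1 : K) / 2) : 𝒫) = C (1 / 4) * 2 := by rw [← map_ofNat C 2, ← map_mul]; norm_num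
  have h4 : (C ((2 * (k : K) + 1) / 4) : 𝒫) = C (1 / 4) * C (2 * (k : K) + 1) := by
    rw [← map_mul]; ring_nf
  have h : (X 1 + C ((1 : K) / 2) * X 2 ^ k) ^ 2 - C ((2 * (k : K) + 1) / 4) * X 2 ^ (2 * k) =
      C (1 / 4) * (w K k ^ 2 - C (2 * (k : K) + 1) * X 2 ^ (2 * k)) := by
    rw [h2, h4, w]
    linear_combination (C (1 / 4) * X 2 ^ (2 * k) - X 1 ^ 2) * h1
  rw [Ideal.Quotient.mk_eq_mk_iff_sub_mem, h]
  exact Ideal.mul_mem_left _ _ (w_sq_sub_mem hk)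

end DSingularity

end

/-- For `f̄ = y₁² + y₂²y₃ + y₂y₃^(k+1)` (`k ≥ 1`), `Jac(f̄)` has dimension
`2k + 2`, and in `Jac(f̄)` the identity `[(y₂ + ½y₃^k)²] = [(2k+1)/4 · y₃^(2k)]`
holds. -/
theorem stmt15 (k : ℕ) (hk : 1 ≤ k)
    (f : MvPolynomial (Fin 3) ℂ)
    (hf : f = X 0 ^ 2 + X 1 ^ 2 * X 2 + X 1 * X 2 ^ (k + 1))
    (J : Ideal (MvPolynomial (Fin 3) ℂ))
    (hJ : J = Ideal.span {pderiv 0 f, pderiv 1 f, pderiv 2 f}) :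
    Module.finrank ℂ (MvPolynomial (Fin 3) ℂ ⧸ J) = 2 * k + 2 ∧
    Ideal.Quotient.mk J ((X 1 + C ((1 : ℂ) / 2) * X 2 ^ k) ^ 2)
      = Ideal.Quotient.mk J (C ((2 * (k : ℂ) + 1) / 4) * X 2 ^ (2 * k)) := by
  subst hf hJ
  exact ⟨DSingularity.finrank_quotient_jacobianIdeal hk,
    DSingularity.mk_X_one_add_half_X_two_pow_sq hk⟩
end

section
/- Let f = x₁² + x₂² + x₂x₃^(2k+1), k ≥ 1 (the A_{4k+1} singularity in these coordinates). Then Jac(f) has dimension 4k+1 over ℂ. Moreover, for g acting by (x₁,x₂,x₃) ↦ (x₁,-x₂,-x₃), f is g-invariant and the g-invariant subspace of Jac(f) has dimension 2k+1, spanned by the classes of 1, x₃², x₃⁴, …, x₃^(4k). -/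
/-!
Over a field of characteristic zero `2` and `2k+1` are units, so the Jacobian ideal is
`(x₁, 2x₂ + x₃^(2k+1), x₂x₃^(2k))`. Modulo it `x₁ = 0` and `x₂ = -x₃^(2k+1)/2`, and then
`x₂x₃^(2k) = 0` becomes `x₃^(4k+1) = 0`; so `Jac(f) ≅ K[t]/(t^(4k+1))` with `x₃ ↦ t`, and
`1, x₃, …, x₃^(4k)` is a basis. The involution induced by `g` is diagonal in this basis with
eigenvalues `(-1)^j`, so its fixed space is spanned by the even powers of `x₃`.
-/

open MvPolynomial

namespace Module.Basis

variable {R M ι : Type*} [CommRing R] [AddCommGroup M] [Module R M]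
  {T : Module.End R M} {ε : ι → R}

theorem repr_apply_of_diagonal (B : Basis ι R M) (hT : ∀ i, T (B i) = ε i • B i)
    (x : M) (i : ι) : B.repr (T x) i = ε i * B.repr x i := by
  have : (B.coord i).comp T = ε i • B.coord i := B.ext fun j => by
    classical
    simp only [LinearMap.comp_apply, hT, LinearMap.smul_apply, map_smul, coord_apply,
      repr_self, Finsupp.single_apply, smul_eq_mul]
    split_ifs with h <;> simp [h]
  exact LinearMap.congr_fun this x

theorem eigenspace_eq_span_of_diagonal [IsDomain R] (B : Basis ι R M)
    (hT : ∀ i, T (B i) = ε i • B i) (μ : R) :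
    Module.End.eigenspace T μ = Submodule.span R (B '' {i | ε i = μ}) := by
  ext x
  rw [B.mem_span_image, Module.End.mem_eigenspace_iff, ← B.repr.injective.eq_iff]
  simp only [Finsupp.ext_iff, repr_apply_of_diagonal B hT, map_smul, Finsupp.smul_apply,
    smul_eq_mul]
  refine ⟨fun h i hi => mul_right_cancel₀ (Finsupp.mem_support_iff.mp hi) (h i),
    fun h i => ?_⟩
  by_cases hi : B.repr x i = 0
  · simp [hi]
  · rw [h (Finsupp.mem_support_iff.mpr hi)]

theorem exists_basis_eigenspace_of_diagonal [IsDomain R] (B : Basis ι R M)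
    (hT : ∀ i, T (B i) = ε i • B i) (μ : R) {κ : Type*} (e : κ → ι)
    (he : Function.Injective e) (hrange : Set.range e = {i | ε i = μ}) :
    ∃ b : Basis κ R (Module.End.eigenspace T μ), ∀ j, (b j : M) = B (e j) := by
  have hspan : Submodule.span R (Set.range (B ∘ e)) = Module.End.eigenspace T μ := by
    rw [Set.range_comp, hrange, B.eigenspace_eq_span_of_diagonal hT]
  refine ⟨(Basis.span (B.linearIndependent.comp e he)).map (LinearEquiv.ofEq _ _ hspan),
    fun j => ?_⟩
  simp

end Module.Basis

section
variable (R : Type*) [CommRing R] (k : ℕ)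

noncomputable def reducedJacobianIdeal : Ideal (MvPolynomial (Fin 3) R) :=
  Ideal.span {X 0, 2 * X 1 + X 2 ^ (2 * k + 1), X 1 * X 2 ^ (2 * k)}

variable {R}

theorem X_two_pow_mem_reducedJacobianIdeal :
    (X 2 ^ (4 * k + 1) : MvPolynomial (Fin 3) R) ∈ reducedJacobianIdeal R k := by
  have h1 : (2 * X 1 + X 2 ^ (2 * k + 1) : MvPolynomial (Fin 3) R) ∈ reducedJacobianIdeal R k :=
    Ideal.subset_span (by simp)
  have h2 : (X 1 * X 2 ^ (2 * k) : MvPolynomial (Fin 3) R) ∈ reducedJacobianIdeal R k :=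
    Ideal.subset_span (by simp)
  convert sub_mem (Ideal.mul_mem_left _ (X 2 ^ (2 * k)) h1) (Ideal.mul_mem_left _ 2 h2) using 1
  ring

variable (R) in
noncomputable def adjoinRootToQuotient :
    AdjoinRoot (Polynomial.X ^ (4 * k + 1) : Polynomial R) →ₐ[R]
      MvPolynomial (Fin 3) R ⧸ reducedJacobianIdeal R k :=
  AdjoinRoot.liftAlgHom _ (Algebra.ofId R _) (Ideal.Quotient.mk _ (X 2)) <| by
    simpa [← map_pow, Ideal.Quotient.eq_zero_iff_mem] using X_two_pow_mem_reducedJacobianIdeal k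

theorem adjoinRootToQuotient_root :
    adjoinRootToQuotient R k (AdjoinRoot.root _) = Ideal.Quotient.mk _ (X 2) :=
  AdjoinRoot.liftAlgHom_root _ _ _ _

variable (R) in
noncomputable def signFlip : MvPolynomial (Fin 3) R →ₐ[R] MvPolynomial (Fin 3) R :=
  aeval ![X 0, -X 1, -X 2]

theorem signFlip_invariant :
    signFlip R (X 0 ^ 2 + X 1 ^ 2 + X 1 * X 2 ^ (2 * k + 1)) =
      X 0 ^ 2 + X 1 ^ 2 + X 1 * X 2 ^ (2 * k + 1) := by
  simp [signFlip, Odd.neg_pow ⟨k, rfl⟩]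

theorem reducedJacobianIdeal_le_comap_signFlip :
    reducedJacobianIdeal R k ≤ (reducedJacobianIdeal R k).comap (signFlip R) := by
  refine Ideal.span_le.mpr fun p hp => ?_
  have hmem : p ∈ reducedJacobianIdeal R k := Ideal.subset_span hp
  rw [SetLike.mem_coe, Ideal.mem_comap]
  rcases hp with rfl | rfl | rfl
  · simpa [signFlip] using hmem
  · convert neg_mem hmem using 1
    simp only [signFlip, map_add, map_mul, map_pow, map_ofNat, aeval_X, Matrix.cons_val_one,
      Matrix.cons_val_zero, Matrix.cons_val, Odd.neg_pow ⟨k, rfl⟩]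
    ring
  · convert neg_mem hmem using 1
    simp only [signFlip, map_mul, map_pow, aeval_X, Matrix.cons_val_one,
      Matrix.cons_val_zero, Matrix.cons_val, Even.neg_pow ⟨k, two_mul k⟩]
    ring

theorem signFlip_X_two_pow (j : ℕ) :
    signFlip R (X 2 ^ j) = (-1 : R) ^ j • X 2 ^ j := by
  rw [signFlip, map_pow, aeval_X, smul_eq_C_mul, map_pow, map_neg, map_one, ← neg_pow]
  rfl

theorem quotientMap_signFlip_mk_X_two_pow (j : ℕ) :
    Ideal.quotientMapₐ _ (signFlip R) (reducedJacobianIdeal_le_comap_signFlip k)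
        (Ideal.Quotient.mk (reducedJacobianIdeal R k) (X 2 ^ j)) =
      (-1 : R) ^ j • Ideal.Quotient.mk (reducedJacobianIdeal R k) (X 2 ^ j) := by
  rw [Ideal.quotient_map_mkₐ, signFlip_X_two_pow, map_smul, Ideal.Quotient.mkₐ_eq_mk]

end

section
variable {K : Type*} [Field K] [CharZero K] (k : ℕ)

theorem reducedJacobianIdeal_le_ker_aeval {A : Type*} [CommRing A] [Algebra K A] {t : A}
    (ht : t ^ (4 * k + 1) = 0) :
    reducedJacobianIdeal K k ≤
      RingHom.ker (aeval ![0, -(2⁻¹ : K) • t ^ (2 * k + 1), t]) := by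
  simp only [reducedJacobianIdeal, Ideal.span_le, Set.insert_subset_iff,
    Set.singleton_subset_iff, SetLike.mem_coe, RingHom.mem_ker]
  refine ⟨by simp, ?_, ?_⟩ <;>
    simp only [map_add, map_mul, map_pow, map_ofNat, aeval_X, Matrix.cons_val_one,
      Matrix.cons_val_zero, Matrix.cons_val]
  · algebra
  · linear_combination (norm := algebra) -(2⁻¹ : K) • ht

variable (K) in
noncomputable def quotientToAdjoinRoot :
    (MvPolynomial (Fin 3) K ⧸ reducedJacobianIdeal K k) →ₐ[K]
      AdjoinRoot (Polynomial.X ^ (4 * k + 1) : Polynomial K) :=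
  Ideal.Quotient.liftₐ _ (aeval ![0, -(2⁻¹ : K) • AdjoinRoot.root _ ^ (2 * k + 1),
      AdjoinRoot.root _]) fun _ ha => RingHom.mem_ker.mp <| reducedJacobianIdeal_le_ker_aeval k
    (by rw [← AdjoinRoot.mk_X, ← map_pow, AdjoinRoot.mk_self]) ha

theorem quotientToAdjoinRoot_mk (p : MvPolynomial (Fin 3) K) :
    quotientToAdjoinRoot K k (Ideal.Quotient.mk _ p) =
      aeval ![0, -(2⁻¹ : K) • AdjoinRoot.root _ ^ (2 * k + 1), AdjoinRoot.root _] p :=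
  rfl

variable (K) in
noncomputable def adjoinRootEquivQuotient :
    AdjoinRoot (Polynomial.X ^ (4 * k + 1) : Polynomial K) ≃ₐ[K]
      MvPolynomial (Fin 3) K ⧸ reducedJacobianIdeal K k :=
  AlgEquiv.ofAlgHom (adjoinRootToQuotient K k) (quotientToAdjoinRoot K k)
    (by
      refine Ideal.Quotient.algHom_ext _ (MvPolynomial.algHom_ext fun i => ?_)
      have hmem {p} (hp : p ∈ ({X 0, 2 * X 1 + X 2 ^ (2 * k + 1), X 1 * X 2 ^ (2 * k)} :
          Set (MvPolynomial (Fin 3) K))) : Ideal.Quotient.mk (reducedJacobianIdeal K k) p = 0 :=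
        Ideal.Quotient.eq_zero_iff_mem.mpr (Ideal.subset_span hp)
      fin_cases i <;> simp only [AlgHom.comp_apply, Ideal.Quotient.mkₐ_eq_mk,
        quotientToAdjoinRoot_mk, aeval_X, AlgHom.id_apply]
      · simpa using (hmem (by simp)).symm
      · have h := hmem (p := 2 * X 1 + X 2 ^ (2 * k + 1)) (by simp)
        simp only [map_add, map_mul, map_ofNat, map_pow] at h
        simp only [Fin.mk_one, Matrix.cons_val_one, Matrix.cons_val_zero, map_smul, map_pow,
          adjoinRootToQuotient_root]
        linear_combination (norm := algebra) -(2⁻¹ : K) • h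
      · simp [adjoinRootToQuotient_root])
    (AdjoinRoot.algHom_ext (by simp [quotientToAdjoinRoot_mk, adjoinRootToQuotient_root]))

theorem span_pderiv_eq_s16 :
    Ideal.span {pderiv 0 (X 0 ^ 2 + X 1 ^ 2 + X 1 * X 2 ^ (2 * k + 1)),
      pderiv 1 (X 0 ^ 2 + X 1 ^ 2 + X 1 * X 2 ^ (2 * k + 1)),
      pderiv 2 (X 0 ^ 2 + X 1 ^ 2 + X 1 * X 2 ^ (2 * k + 1))} =
      reducedJacobianIdeal K k := by
  have h0 : pderiv 0 (X 0 ^ 2 + X 1 ^ 2 + X 1 * X 2 ^ (2 * k + 1) : MvPolynomial (Fin 3) K)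
      = 2 * X 0 := by
    simp [pderiv_X]
  have h1 : pderiv 1 (X 0 ^ 2 + X 1 ^ 2 + X 1 * X 2 ^ (2 * k + 1) : MvPolynomial (Fin 3) K)
      = 2 * X 1 + X 2 ^ (2 * k + 1) := by
    simp [pderiv_X]
  have h2 : pderiv 2 (X 0 ^ 2 + X 1 ^ 2 + X 1 * X 2 ^ (2 * k + 1) : MvPolynomial (Fin 3) K)
      = ((2 * k + 1 : ℕ) : MvPolynomial (Fin 3) K) * (X 1 * X 2 ^ (2 * k)) := by
    simp [pderiv_X]; ring
  have hu (n : ℕ) (hn : n ≠ 0) : IsUnit (n : MvPolynomial (Fin 3) K) := by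
    simpa using (IsUnit.mk0 (n : K) (Nat.cast_ne_zero.mpr hn)).map C
  rw [h0, h1, h2, reducedJacobianIdeal, Ideal.span_insert, Ideal.span_insert,
    Ideal.span_insert (X 0), Ideal.span_insert,
    Ideal.span_singleton_mul_left_unit (by simpa using hu 2 two_ne_zero),
    Ideal.span_singleton_mul_left_unit (hu _ (2 * k).succ_ne_zero)]

theorem exists_basis_X_two_pow :
    ∃ B : Module.Basis (Fin (4 * k + 1)) K (MvPolynomial (Fin 3) K ⧸ reducedJacobianIdeal K k),
      ∀ j, B j = Ideal.Quotient.mk _ (X 2 ^ (j : ℕ)) := by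
  have hne : (Polynomial.X ^ (4 * k + 1) : Polynomial K) ≠ 0 := pow_ne_zero _ Polynomial.X_ne_zero
  let pb := (AdjoinRoot.powerBasis hne).map (adjoinRootEquivQuotient K k)
  have hdim : pb.dim = 4 * k + 1 := Polynomial.natDegree_X_pow _
  refine ⟨pb.basis.reindex (finCongr hdim), fun j => ?_⟩
  rw [Module.Basis.reindex_apply, pb.basis_eq_pow, finCongr_symm, finCongr_apply, Fin.val_cast]
  simp [pb, adjoinRootEquivQuotient, adjoinRootToQuotient_root]

end

def doubleIndex (k : ℕ) (i : Fin (2 * k + 1)) : Fin (4 * k + 1) :=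
  ⟨2 * i, by omega⟩

theorem doubleIndex_injective (k : ℕ) : Function.Injective (doubleIndex k) :=
  fun i i' h => Fin.ext (by simpa [doubleIndex] using congrArg Fin.val h)

theorem range_doubleIndex (k : ℕ) :
    Set.range (doubleIndex k) = {j : Fin (4 * k + 1) | Even (j : ℕ)} := by
  ext j
  simp only [doubleIndex, Set.mem_range, Set.mem_ofPred_eq, Fin.ext_iff]
  constructor
  · rintro ⟨i, hi⟩
    exact hi ▸ even_two_mul _
  · rintro ⟨m, hm⟩
    exact ⟨⟨m, by omega⟩, by simp; omega⟩

theorem stmt16_general (k : ℕ)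
    (f : MvPolynomial (Fin 3) ℂ)
    (hf : f = X 0 ^ 2 + X 1 ^ 2 + X 1 * X 2 ^ (2 * k + 1))
    (J : Ideal (MvPolynomial (Fin 3) ℂ))
    (hJ : J = Ideal.span {pderiv 0 f, pderiv 1 f, pderiv 2 f})
    (σ : MvPolynomial (Fin 3) ℂ →ₐ[ℂ] MvPolynomial (Fin 3) ℂ)
    (hσ : σ = aeval ![X 0, -X 1, -X 2]) :
    Module.finrank ℂ (MvPolynomial (Fin 3) ℂ ⧸ J) = 4 * k + 1 ∧
    σ f = f ∧
    ∃ σbar : (MvPolynomial (Fin 3) ℂ ⧸ J) →ₗ[ℂ] (MvPolynomial (Fin 3) ℂ ⧸ J),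
      (∀ p : MvPolynomial (Fin 3) ℂ,
        σbar (Ideal.Quotient.mk J p) = Ideal.Quotient.mk J (σ p)) ∧
      ∃ b : Module.Basis (Fin (2 * k + 1)) ℂ (Module.End.eigenspace σbar 1),
        ∀ i : Fin (2 * k + 1), (b i : MvPolynomial (Fin 3) ℂ ⧸ J)
          = Ideal.Quotient.mk J (X 2 ^ (2 * (i : ℕ))) := by
  subst hf hσ
  rw [span_pderiv_eq_s16] at hJ
  subst hJ
  obtain ⟨B, hB⟩ := exists_basis_X_two_pow (K := ℂ) k
  have hdiag (j : Fin (4 * k + 1)) :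
      (Ideal.quotientMapₐ _ _ (reducedJacobianIdeal_le_comap_signFlip k)).toLinearMap (B j) =
        (-1 : ℂ) ^ (j : ℕ) • B j := by
    rw [hB]
    exact quotientMap_signFlip_mk_X_two_pow k j
  have hrange : Set.range (doubleIndex k) = {j : Fin (4 * k + 1) | (-1 : ℂ) ^ (j : ℕ) = 1} := by
    simp [range_doubleIndex, neg_one_pow_eq_one_iff_even (by norm_num : (-1 : ℂ) ≠ 1)]
  obtain ⟨b, hb⟩ :=
    B.exists_basis_eigenspace_of_diagonal hdiag 1 _ (doubleIndex_injective k) hrange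
  exact ⟨by rw [Module.finrank_eq_card_basis B, Fintype.card_fin], signFlip_invariant k, _,
    fun _ => rfl, b, fun i => (hb i).trans (hB _)⟩

/-- For `f = x₁² + x₂² + x₂x₃^(2k+1)` (`k ≥ 1`): `Jac(f)` has dimension `4k+1`;
moreover `g : (x₁,x₂,x₃) ↦ (x₁,-x₂,-x₃)` preserves `f` and the `g`-invariant
subspace of `Jac(f)` has dimension `2k+1`, spanned by the classes of
`1, x₃², …, x₃^(4k)`. -/
theorem stmt16 (k : ℕ) (hk : 1 ≤ k)
    (f : MvPolynomial (Fin 3) ℂ)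
    (hf : f = X 0 ^ 2 + X 1 ^ 2 + X 1 * X 2 ^ (2 * k + 1))
    (J : Ideal (MvPolynomial (Fin 3) ℂ))
    (hJ : J = Ideal.span {pderiv 0 f, pderiv 1 f, pderiv 2 f})
    (σ : MvPolynomial (Fin 3) ℂ →ₐ[ℂ] MvPolynomial (Fin 3) ℂ)
    (hσ : σ = aeval ![X 0, -X 1, -X 2]) :
    Module.finrank ℂ (MvPolynomial (Fin 3) ℂ ⧸ J) = 4 * k + 1 ∧
    σ f = f ∧
    ∃ σbar : (MvPolynomial (Fin 3) ℂ ⧸ J) →ₗ[ℂ] (MvPolynomial (Fin 3) ℂ ⧸ J),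
      (∀ p : MvPolynomial (Fin 3) ℂ,
        σbar (Ideal.Quotient.mk J p) = Ideal.Quotient.mk J (σ p)) ∧
      ∃ b : Module.Basis (Fin (2 * k + 1)) ℂ (Module.End.eigenspace σbar 1),
        ∀ i : Fin (2 * k + 1), (b i : MvPolynomial (Fin 3) ℂ ⧸ J)
          = Ideal.Quotient.mk J (X 2 ^ (2 * (i : ℕ))) :=
  stmt16_general k f hf J hJ σ hσ
end

section
/- Let F^G = x₁² + x₂² + x₂x₃^(2k+1) + Σ_{α=0}^{2k} s_α x₃^(2α) and consider the quotient module M = Ω³ ⊗ ℂ[[z]] ⊗ ℂ[s] / (zd + dF^G∧)(Ω² ⊗ ℂ[[z]] ⊗ ℂ[s]). Then for 2k+1 ≤ α+β ≤ 4k with p := α+β-(2k+1) ≥ 0, the relation [x₃^(2(α+β))] = (4/(2k+1))·[z(p+½)x₃^(2p) + Σ_{γ=0}^{2k} γ s_γ x₃^(2(γ+p))] holds in M. -/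
open MvPolynomial

noncomputable section

/-!
Two explicit 2-forms do it. Applying `zd + dF∧` to `x₃^(2p+2k+1) dx₃∧dx₁` gives
`2x₂x₃^(2p+2k+1) + x₃^(2(α+β))`, and applying it to `x₃^(2p+1) dx₁∧dx₂` gives
`(2p+1)zx₃^(2p) + (2k+1)x₂x₃^(2p+2k+1) + Σ_γ 2γ s_γ x₃^(2(γ+p))`, because `x₃ ∂₃F` is the
Euler-type sum `(2k+1)x₂x₃^(2k+1) + Σ_γ 2γ s_γ x₃^(2γ)`. Subtracting `2/(2k+1)` times the second
image from the first cancels the `x₂`-terms and leaves the claimed relation.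
-/

variable {R : Type*} [CommSemiring R]

/-- `zd + dF∧` on the 2-form `A dx₂∧dx₃ + B dx₃∧dx₁ + C dx₁∧dx₂`, encoded as the triple
`(A, B, C)`; the variables `0, 1, 2` are `x₁, x₂, x₃` and `3` is `z`. -/
def twistedDiff (F : MvPolynomial ℕ R) :
    (MvPolynomial ℕ R × MvPolynomial ℕ R × MvPolynomial ℕ R) →ₗ[R] MvPolynomial ℕ R where
  toFun ω := X 3 * (pderiv 0 ω.1 + pderiv 1 ω.2.1 + pderiv 2 ω.2.2)
    + pderiv 0 F * ω.1 + pderiv 1 F * ω.2.1 + pderiv 2 F * ω.2.2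
  map_add' ω η := by simp only [Prod.fst_add, Prod.snd_add, map_add]; ring
  map_smul' c ω := by
    simp only [Prod.smul_fst, Prod.smul_snd, smul_eq_C_mul, pderiv_C_mul, RingHom.id_apply]
    ring

theorem twistedDiff_apply (F A B C' : MvPolynomial ℕ R) :
    twistedDiff F (A, B, C') = X 3 * (pderiv 0 A + pderiv 1 B + pderiv 2 C')
      + pderiv 0 F * A + pderiv 1 F * B + pderiv 2 F * C' := rfl

theorem twistedDiff_zero_X_two_pow_zero (F : MvPolynomial ℕ R) (n : ℕ) :
    twistedDiff F (0, X 2 ^ n, 0) = pderiv 1 F * X 2 ^ n := by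
  simp [twistedDiff_apply]

theorem twistedDiff_zero_zero_X_two_pow_succ (F : MvPolynomial ℕ R) (n : ℕ) :
    twistedDiff F (0, 0, X 2 ^ (n + 1))
      = ((n + 1 : ℕ) : MvPolynomial ℕ R) * X 3 * X 2 ^ n + X 2 ^ n * (X 2 * pderiv 2 F) := by
  simp only [twistedDiff_apply, map_zero, add_zero, Derivation.leibniz_pow, add_tsub_cancel_right,
    pderiv_X, Pi.single_eq_same, smul_eq_mul, mul_one, nsmul_eq_mul, Nat.cast_add, Nat.cast_one,
    zero_add, mul_zero]
  ring

/-- `F^G`, with the deformation parameter `s_γ` as the variable `4 + γ`. -/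
def unfoldingPoly (k : ℕ) : MvPolynomial ℕ R :=
  X 0 ^ 2 + X 1 ^ 2 + X 1 * X 2 ^ (2 * k + 1)
    + ∑ γ ∈ Finset.range (2 * k + 1), X (4 + γ) * X 2 ^ (2 * γ)

theorem pderiv_one_unfoldingPoly (k : ℕ) :
    pderiv 1 (unfoldingPoly k : MvPolynomial ℕ R) = 2 * X 1 + X 2 ^ (2 * k + 1) := by
  simp [unfoldingPoly, show ∀ γ : ℕ, 4 + γ ≠ 1 by omega]

theorem X_mul_pderiv_X_mul_X_pow {σ : Type*} {i j : σ} (h : j ≠ i) (n : ℕ) :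
    X i * pderiv i (X j * X i ^ n : MvPolynomial σ R) = (n : MvPolynomial σ R) * X j * X i ^ n := by
  cases n with
  | zero => simp [pderiv_X_of_ne h]
  | succ n =>
    simp only [Derivation.leibniz, Derivation.leibniz_pow, pderiv_X_self, pderiv_X_of_ne h,
      smul_eq_mul, nsmul_eq_mul, add_tsub_cancel_right]
    ring

theorem X_two_mul_pderiv_two_unfoldingPoly (k : ℕ) :
    X 2 * pderiv 2 (unfoldingPoly k : MvPolynomial ℕ R)
      = ((2 * k + 1 : ℕ) : MvPolynomial ℕ R) * X 1 * X 2 ^ (2 * k + 1)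
        + 2 * ∑ γ ∈ Finset.range (2 * k + 1),
            (γ : MvPolynomial ℕ R) * X (4 + γ) * X 2 ^ (2 * γ) := by
  have hs (γ : ℕ) : X 2 * pderiv 2 (X (4 + γ) * X 2 ^ (2 * γ) : MvPolynomial ℕ R)
      = ((2 * γ : ℕ) : MvPolynomial ℕ R) * X (4 + γ) * X 2 ^ (2 * γ) :=
    X_mul_pderiv_X_mul_X_pow (by omega) _
  simp only [unfoldingPoly, map_add, map_sum, mul_add, Finset.mul_sum, hs,
    X_mul_pderiv_X_mul_X_pow (by decide : (1 : ℕ) ≠ 2), Derivation.leibniz_pow,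
    pderiv_X_of_ne (by decide : (0 : ℕ) ≠ 2), pderiv_X_of_ne (by decide : (1 : ℕ) ≠ 2),
    smul_zero, zero_add]
  refine congrArg _ (Finset.sum_congr rfl fun γ _ => ?_)
  push_cast
  ring

theorem sub_mem_range_twistedDiff_unfoldingPoly {K : Type*} [Field K] [CharZero K] (k p : ℕ) :
    X 2 ^ (2 * (p + (2 * k + 1)))
        - C ((4 : K) / (2 * (k : K) + 1)) *
          (X 3 * C ((p : K) + 1 / 2) * X 2 ^ (2 * p)
            + ∑ γ ∈ Finset.range (2 * k + 1), C (γ : K) * X (4 + γ) * X 2 ^ (2 * (γ + p)))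
      ∈ LinearMap.range (twistedDiff (unfoldingPoly k : MvPolynomial ℕ K)) := by
  set S : MvPolynomial ℕ K :=
    ∑ γ ∈ Finset.range (2 * k + 1), (γ : MvPolynomial ℕ K) * X (4 + γ) * X 2 ^ (2 * γ)
  have hS : X 2 ^ (2 * p) * S
      = ∑ γ ∈ Finset.range (2 * k + 1), C (γ : K) * X (4 + γ) * X 2 ^ (2 * (γ + p)) := by
    rw [Finset.mul_sum]
    refine Finset.sum_congr rfl fun γ _ => ?_
    rw [map_natCast]
    ring
  suffices h : X 2 ^ (2 * (p + (2 * k + 1)))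
        - C ((4 : K) / (2 * (k : K) + 1))
          * (X 3 * C ((p : K) + 1 / 2) * X 2 ^ (2 * p) + X 2 ^ (2 * p) * S)
      = twistedDiff (unfoldingPoly k) (0, X 2 ^ (2 * p + (2 * k + 1)), 0)
        - (2 / (2 * k + 1) : K) • twistedDiff (unfoldingPoly k) (0, 0, X 2 ^ (2 * p + 1)) by
    rw [← hS, h]
    exact sub_mem (LinearMap.mem_range_self _ _)
      (Submodule.smul_mem _ _ (LinearMap.mem_range_self _ _))
  have hk : (2 * k + 1 : K) ≠ 0 := by exact_mod_cast (2 * k).succ_ne_zero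
  have hc₁ : C (2 / (2 * k + 1) : K) * ((2 * k + 1 : ℕ) : MvPolynomial ℕ K) = 2 := by
    rw [← map_natCast C, ← C_mul, ← map_ofNat C]
    congr 1
    push_cast
    field_simp
  have hc₂ : (C (4 / (2 * k + 1) : K) : MvPolynomial ℕ K) = 2 * C (2 / (2 * k + 1) : K) := by
    rw [← map_ofNat C, ← C_mul]
    congr 1
    ring
  have hc₃ : 2 * (C ((p : K) + 1 / 2) : MvPolynomial ℕ K)
      = ((2 * p + 1 : ℕ) : MvPolynomial ℕ K) := by
    rw [← map_natCast C, ← map_ofNat C, ← C_mul]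
    congr 1
    push_cast
    ring
  rw [twistedDiff_zero_X_two_pow_zero, pderiv_one_unfoldingPoly,
    twistedDiff_zero_zero_X_two_pow_succ, X_two_mul_pderiv_two_unfoldingPoly, smul_eq_C_mul]
  linear_combination (X 1 * X 2 ^ (2 * p) * X 2 ^ (2 * k + 1)) * hc₁
    - (X 3 * C ((p : K) + 1 / 2) * X 2 ^ (2 * p) + X 2 ^ (2 * p) * S) * hc₂
    - (C (2 / (2 * k + 1) : K) * X 3 * X 2 ^ (2 * p)) * hc₃

theorem stmt18_general (k : ℕ) (α β p : ℕ)
    (h1 : 2 * k + 1 ≤ α + β)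
    (hp : p = α + β - (2 * k + 1))
    (F : MvPolynomial ℕ ℂ)
    (hF : F = X 0 ^ 2 + X 1 ^ 2 + X 1 * X 2 ^ (2 * k + 1)
      + ∑ γ ∈ Finset.range (2 * k + 1), X (4 + γ) * X 2 ^ (2 * γ)) :
    ∃ A B C' : MvPolynomial ℕ ℂ,
      (X 2 ^ (2 * (α + β))
        - C ((4 : ℂ) / (2 * (k : ℂ) + 1)) *
          (X 3 * C ((p : ℂ) + 1 / 2) * X 2 ^ (2 * p)
            + ∑ γ ∈ Finset.range (2 * k + 1),
                C ((γ : ℂ)) * X (4 + γ) * X 2 ^ (2 * (γ + p))) :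
        MvPolynomial ℕ ℂ)
        = X 3 * (pderiv 0 A + pderiv 1 B + pderiv 2 C')
          + pderiv 0 F * A + pderiv 1 F * B + pderiv 2 F * C' := by
  obtain ⟨⟨A, B, C'⟩, h⟩ := sub_mem_range_twistedDiff_unfoldingPoly (K := ℂ) k p
  refine ⟨A, B, C', ?_⟩
  rw [show α + β = p + (2 * k + 1) by omega, hF, ← h]
  rfl

/-- Relation in the Brieskorn-type module of
`F^G = x₁² + x₂² + x₂x₃^(2k+1) + Σ_{γ=0}^{2k} s_γ x₃^(2γ)`.
Variables of `MvPolynomial ℕ ℂ`: `0,1,2` are `x₁,x₂,x₃`, `3` is `z`, and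
`4+γ` is `s_γ`.  A 2-form `A dx₂∧dx₃ + B dx₃∧dx₁ + C dx₁∧dx₂` maps under
`zd + dF^G∧` to `z(∂₁A + ∂₂B + ∂₃C) + ∂₁F·A + ∂₂F·B + ∂₃F·C`.  For
`2k+1 ≤ α+β ≤ 4k` and `p = α+β-(2k+1)` the relation
`[x₃^(2(α+β))] = (4/(2k+1))·[z(p+½)x₃^(2p) + Σ_γ γ s_γ x₃^(2(γ+p))]`
holds in the quotient, i.e. the difference lies in the image. -/
theorem stmt18 (k : ℕ) (hk : 1 ≤ k) (α β p : ℕ)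
    (h1 : 2 * k + 1 ≤ α + β) (h2 : α + β ≤ 4 * k)
    (hp : p = α + β - (2 * k + 1))
    (F : MvPolynomial ℕ ℂ)
    (hF : F = X 0 ^ 2 + X 1 ^ 2 + X 1 * X 2 ^ (2 * k + 1)
      + ∑ γ ∈ Finset.range (2 * k + 1), X (4 + γ) * X 2 ^ (2 * γ)) :
    ∃ A B C' : MvPolynomial ℕ ℂ,
      (X 2 ^ (2 * (α + β))
        - C ((4 : ℂ) / (2 * (k : ℂ) + 1)) *
          (X 3 * C ((p : ℂ) + 1 / 2) * X 2 ^ (2 * p)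
            + ∑ γ ∈ Finset.range (2 * k + 1),
                C ((γ : ℂ)) * X (4 + γ) * X 2 ^ (2 * (γ + p))) :
        MvPolynomial ℕ ℂ)
        = X 3 * (pderiv 0 A + pderiv 1 B + pderiv 2 C')
          + pderiv 0 F * A + pderiv 1 F * B + pderiv 2 F * C' :=
  stmt18_general k α β p h1 hp F hF
end
end
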